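/- arXiv:1311.6420 — 2 statements merged into one kernel-verified Lean document; each statement's English description precedes it below -/
import Mathlib

section
/- Take J = [r]×[r] and suppose every matricially free creation operator is standard. Let F be the full Fock space over I = [r]×[r]×L, with free creation operators ℓ(p,q,l) := ℓ((p,q,l)), and let F^{⊕r} be the Hilbert direct sum of r copies of F. For p,q ∈ [r] and l ∈ L, let L_{p,q}(l) be the bounded operator on F^{⊕r} sending (ξ₁,…,ξ_r) to the tuple having ℓ(p,q,l)ξ_q in position p and 0 in all other positions. Then there exists a linear isometry τ : M → F^{⊕r} such that τ(Ω_q) = (the tuple with δ_Ω in position q and 0 elsewhere) for every q ∈ [r], and τ ∘ ℘_{p,q}(l) = L_{p,q}(l) ∘ τ for all p,q ∈ [r] and l ∈ L. -/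
noncomputable section

/-- A letter of a word in the matricially free Fock space of tracial type. -/
abbrev MLetter (r : ℕ) (L : Type*) := (Fin r × Fin r) × L

/-- A finite nonempty chained word with letters in `J × L`. -/
structure MWord (r : ℕ) (J : Set (Fin r × Fin r)) (L : Type*) where
  head : MLetter r L
  tail : List (MLetter r L)
  headJ : head.1 ∈ J
  tailJ : ∀ x ∈ tail, x.1 ∈ J
  chain : List.Chain' (fun a b : MLetter r L => a.1.2 = b.1.1) (head :: tail)

/-- Canonical orthonormal basis index set: vacua `Ω₁,…,Ω_r` and the words. -/
abbrev MBasis (r : ℕ) (J : Set (Fin r × Fin r)) (L : Type*) := (Fin r) ⊕ (MWord r J L)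

/-- The matricially free Fock space of tracial type, `ℓ²` of the basis set. -/
abbrev MSpace (r : ℕ) (J : Set (Fin r × Fin r)) (L : Type*) :=
  lp (fun _ : MBasis r J L => ℂ) 2

/-- Canonical basis vector. -/
def mvec {r : ℕ} {J : Set (Fin r × Fin r)} {L : Type*} (i : MBasis r J L) : MSpace r J L := by
  classical exact lp.single 2 i 1

/-- The vacuum vector `Ω_q`. -/
def vac {r : ℕ} {J : Set (Fin r × Fin r)} {L : Type*} (q : Fin r) : MSpace r J L :=
  mvec (Sum.inl q)

/-- Basis vector of a word. -/
def wvec {r : ℕ} {J : Set (Fin r × Fin r)} {L : Type*} (w : MWord r J L) : MSpace r J L :=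
  mvec (Sum.inr w)

/-- The single-letter word. -/
def MWord.single {r : ℕ} {J : Set (Fin r × Fin r)} {L : Type*}
    (x : MLetter r L) (hx : x.1 ∈ J) : MWord r J L :=
  ⟨x, [], hx, (by intro y hy; cases hy), List.isChain_singleton _⟩

/-- Prepending a letter to a word. -/
def MWord.cons {r : ℕ} {J : Set (Fin r × Fin r)} {L : Type*}
    (x : MLetter r L) (hx : x.1 ∈ J) (w : MWord r J L)
    (hc : x.1.2 = w.head.1.1) : MWord r J L :=
  ⟨x, w.head :: w.tail, hx, by
      intro y hy
      rcases List.mem_cons.mp hy with h | h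
      · exact h ▸ w.headJ
      · exact w.tailJ y h,
    List.isChain_cons_cons.mpr ⟨hc, w.chain⟩⟩

/-- `T` is the matricially free creation operator `℘_{p,q}(l)` with covariance `b`:
it maps `Ω_q` to `√b·((p,q,l))`, each word starting with first index `q` to `√b` times the
word with `((p,q),l)` prepended, and all other canonical basis vectors to `0`. -/
def IsMFCreation {r : ℕ} {J : Set (Fin r × Fin r)} {L : Type*}
    (b : ℝ) (p q : Fin r) (l : L) (hpq : ((p, q) : Fin r × Fin r) ∈ J)
    (T : MSpace r J L →L[ℂ] MSpace r J L) : Prop :=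
  T (vac q) = (Real.sqrt b : ℂ) • wvec (MWord.single ((p, q), l) hpq) ∧
  (∀ q' : Fin r, q' ≠ q → T (vac q') = 0) ∧
  (∀ (w : MWord r J L) (h : w.head.1.1 = q),
      T (wvec w) = (Real.sqrt b : ℂ) • wvec (MWord.cons ((p, q), l) hpq w h.symm)) ∧
  (∀ w : MWord r J L, w.head.1.1 ≠ q → T (wvec w) = 0)

/-- The vector state `Ψ_q(a) = ⟨aΩ_q, Ω_q⟩`. -/
def PsiM {r : ℕ} {J : Set (Fin r × Fin r)} {L : Type*} (q : Fin r)
    (a : MSpace r J L →L[ℂ] MSpace r J L) : ℂ :=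
  @inner ℂ _ _ (vac q : MSpace r J L) (a (vac q))

end
noncomputable section

/-- Basis index set of the full Fock space over `I`: the vacuum and the nonempty words. -/
abbrev FBasis (I : Type*) := Unit ⊕ {w : List I // w ≠ []}

/-- The full Fock space over `I`, `ℓ²` of its canonical basis set. -/
abbrev FSpace (I : Type*) := lp (fun _ : FBasis I => ℂ) 2

/-- Canonical basis vector of the full Fock space. -/
def fvec {I : Type*} (i : FBasis I) : FSpace I := by
  classical exact lp.single 2 i 1

/-- The vacuum vector `δ_Ω`. -/
def fvac {I : Type*} : FSpace I := fvec (Sum.inl ())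

/-- The basis vector `δ_w` of a nonempty word `w`. -/
def fword {I : Type*} (w : List I) (hw : w ≠ []) : FSpace I := fvec (Sum.inr ⟨w, hw⟩)

/-- `T` is the free creation operator `ℓ(i)`: it sends `δ_Ω` to `δ_{(i)}` and each
word basis vector `δ_w` to `δ_{i·w}`. -/
def IsFreeCreation {I : Type*} (i : I) (T : FSpace I →L[ℂ] FSpace I) : Prop :=
  T fvac = fword [i] (by simp) ∧
  ∀ (w : List I) (hw : w ≠ []), T (fword w hw) = fword (i :: w) (by simp)

/-- The vacuum state `φ(a) = ⟨aδ_Ω, δ_Ω⟩` on the full Fock space. -/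
def fockState {I : Type*} (a : FSpace I →L[ℂ] FSpace I) : ℂ :=
  @inner ℂ _ _ (fvac : FSpace I) (a fvac)

/-- The Hilbert direct sum `F^{⊕r}` of `r` copies of the full Fock space. -/
abbrev FockR (r : ℕ) (I : Type*) := PiLp 2 (fun _ : Fin r => FSpace I)

/-- Tuple constructor for `F^{⊕r}`. -/
def tupOf {r : ℕ} {I : Type*} (f : Fin r → FSpace I) : FockR r I :=
  (WithLp.equiv 2 (∀ _ : Fin r, FSpace I)).symm f

/-- Component of an element of `F^{⊕r}`. -/
def tupComp {r : ℕ} {I : Type*} (ξ : FockR r I) (k : Fin r) : FSpace I :=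
  (WithLp.equiv 2 (∀ _ : Fin r, FSpace I)) ξ k

/-- `δ^{(q)}`, the tuple with `δ_Ω` in position `q` and `0` elsewhere. -/
def fockDelta {r : ℕ} {I : Type*} (q : Fin r) : FockR r I :=
  tupOf (fun k => if k = q then fvac else 0)

/-- The state `Φ_k(x) = ⟨x δ^{(k)}, δ^{(k)}⟩` on the bounded operators on `F^{⊕r}`. -/
def PhiR {r : ℕ} {I : Type*} (k : Fin r) (x : FockR r I →L[ℂ] FockR r I) : ℂ :=
  @inner ℂ _ _ (fockDelta k : FockR r I) (x (fockDelta k))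

end

/-! A basis vector of `M` is sent to its own word, read in the full Fock space over
`[r] × [r] × L`, placed in the component of `F^{⊕r}` given by its first index (`Ω_q` goes to
`δ_Ω` in component `q`). This map of bases is injective, so it extends to a linear isometry `τ`.
On basis vectors, `℘_{p,q}(l)` and `L_{p,q}(l)` both prepend `(p,q,l)` and move to component `p`
when the first index is `q`, and both vanish otherwise; bounded operators on `ℓ²` that agree on
the canonical basis are equal. -/

theorem PiLp.apply_single_of_apply_eq_ite {η : Type*} [DecidableEq η] {E : Type*}
    [AddCommGroup E] {F : Type*} [FunLike F E E] [ZeroHomClass F E E] {A : F}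
    {T : PiLp 2 (fun _ : η => E) → PiLp 2 (fun _ : η => E)} {p q : η}
    (hT : ∀ ξ k, T ξ k = if k = p then A (ξ q) else 0) (k : η) (v : E) :
    T (PiLp.single 2 k v) = if q = k then PiLp.single 2 p (A v) else 0 := by
  ext j
  rw [hT]
  by_cases hqk : q = k
  · subst hqk
    rw [if_pos rfl, PiLp.single_eq_same, PiLp.ofLp_single, Pi.single_apply]
  · rw [if_neg hqk, PiLp.single_eq_of_ne 2 hqk, map_zero, ite_self, WithLp.ofLp_zero,
      Pi.zero_apply]

section GeneralHilbert

variable {𝕜 : Type*} [RCLike 𝕜] {ι : Type*}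

theorem lp.orthonormal_single_one [DecidableEq ι] :
    Orthonormal 𝕜 (fun i : ι => lp.single 2 i (1 : 𝕜) : ι → lp (fun _ : ι => 𝕜) 2) := by
  rw [orthonormal_iff_ite]
  intro i j
  rw [lp.inner_single_left, lp.single_apply, Pi.single_apply]
  split_ifs <;> simp_all

theorem lp.ext_single_one [DecidableEq ι] {F : Type*} [AddCommMonoid F] [Module 𝕜 F]
    [TopologicalSpace F] [T2Space F] {f g : lp (fun _ : ι => 𝕜) 2 →L[𝕜] F}
    (h : ∀ i, f (lp.single 2 i 1) = g (lp.single 2 i 1)) : f = g :=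
  lp.ext_continuousLinearMap ENNReal.ofNat_ne_top fun i =>
    ContinuousLinearMap.ext_ring (h i)

variable {η : Type*} [Fintype η] [DecidableEq η] {E : Type*} [NormedAddCommGroup E]
  [InnerProductSpace 𝕜 E]

theorem PiLp.inner_single_single (i j : η) (a b : E) :
    inner 𝕜 (PiLp.single 2 i a : PiLp 2 (fun _ : η => E)) (PiLp.single 2 j b) =
      if i = j then inner 𝕜 a b else 0 := by
  rw [PiLp.inner_apply, Finset.sum_eq_single i]
  · split_ifs with h <;> simp [h]
  · intro k _ hk
    simp [hk]
  · simp

theorem Orthonormal.piLpSingle {v : ι → E} (hv : Orthonormal 𝕜 v) :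
    Orthonormal 𝕜 (fun x : η × ι => (PiLp.single 2 x.1 (v x.2) : PiLp 2 (fun _ : η => E))) := by
  classical
  rw [orthonormal_iff_ite] at hv ⊢
  rintro ⟨i, a⟩ ⟨j, b⟩
  rw [PiLp.inner_single_single, hv]
  by_cases hij : i = j <;> simp [hij]

end GeneralHilbert

namespace MBasis

variable {r : ℕ} {J : Set (Fin r × Fin r)} {L : Type*}

/-- The index at which a basis vector can be extended on the left: `q` for `Ω_q`, the first
index of the first letter for a word. -/
def index : MBasis r J L → Fin r
  | Sum.inl q => q
  | Sum.inr w => w.head.1.1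

def cons (x : MLetter r L) (hx : x.1 ∈ J) : (i : MBasis r J L) → x.1.2 = i.index → MBasis r J L
  | Sum.inl _, _ => Sum.inr (MWord.single x hx)
  | Sum.inr w, h => Sum.inr (MWord.cons x hx w h)

@[simp]
theorem index_cons (x : MLetter r L) (hx : x.1 ∈ J) (i : MBasis r J L) (h : x.1.2 = i.index) :
    (i.cons x hx h).index = x.1.1 := by
  cases i <;> rfl

end MBasis

theorem IsMFCreation.apply_mvec {r : ℕ} {J : Set (Fin r × Fin r)} {L : Type*} {b : ℝ}
    {p q : Fin r} {l : L} {hpq : (p, q) ∈ J} {T : MSpace r J L →L[ℂ] MSpace r J L}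
    (hT : IsMFCreation b p q l hpq T) (i : MBasis r J L) :
    T (mvec i) = if h : q = i.index then (Real.sqrt b : ℂ) • mvec (i.cons ((p, q), l) hpq h)
      else 0 := by
  obtain ⟨hvac, hvac_ne, hword, hword_ne⟩ := hT
  split_ifs with h
  · rcases i with q' | w
    · obtain rfl : q = q' := h
      exact hvac
    · exact hword w h.symm
  · rcases i with q' | w
    · exact hvac_ne q' (Ne.symm h)
    · exact hword_ne w (Ne.symm h)

def FBasis.cons {I : Type*} (x : I) : FBasis I → FBasis I
  | Sum.inl _ => Sum.inr ⟨[x], List.cons_ne_nil _ _⟩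
  | Sum.inr w => Sum.inr ⟨x :: w.1, List.cons_ne_nil _ _⟩

theorem IsFreeCreation.apply_fvec {I : Type*} {x : I} {T : FSpace I →L[ℂ] FSpace I}
    (hT : IsFreeCreation x T) : ∀ f : FBasis I, T (fvec f) = fvec (f.cons x)
  | Sum.inl _ => hT.1
  | Sum.inr w => hT.2 w.1 w.2

theorem orthonormal_fvec {I : Type*} : Orthonormal ℂ (fvec : FBasis I → FSpace I) := by
  classical
  exact lp.orthonormal_single_one

theorem fockDelta_eq_single {r : ℕ} {I : Type*} (q : Fin r) :
    (fockDelta q : FockR r I) = PiLp.single 2 q fvac := by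
  ext k
  simp [fockDelta, tupOf]

noncomputable section Embedding

variable {r : ℕ} {J : Set (Fin r × Fin r)} {L : Type*}

def MWord.toList (w : MWord r J L) : List (Fin r × Fin r × L) :=
  (w.head :: w.tail).map (Equiv.prodAssoc _ _ _)

theorem MWord.toList_injective : Function.Injective (MWord.toList : MWord r J L → _) := by
  rintro ⟨x, t, _, _, _⟩ ⟨x', t', _, _, _⟩ h
  obtain ⟨rfl, rfl⟩ := List.cons.inj
    (List.map_injective_iff.mpr (Equiv.injective _) h)
  rfl

def MBasis.toFBasis : MBasis r J L → FBasis (Fin r × Fin r × L)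
  | Sum.inl _ => Sum.inl ()
  | Sum.inr w => Sum.inr ⟨w.toList, by simp [MWord.toList]⟩

theorem MBasis.toFBasis_cons (x : MLetter r L) (hx : x.1 ∈ J) (i : MBasis r J L)
    (h : x.1.2 = i.index) :
    (i.cons x hx h).toFBasis = i.toFBasis.cons (Equiv.prodAssoc _ _ _ x) := by
  cases i <;> rfl

theorem MBasis.injective_index_toFBasis :
    Function.Injective fun i : MBasis r J L => (i.index, i.toFBasis) := by
  rintro (q | w) (q' | w') h <;> simp only [Prod.mk.injEq] at h
  · exact congrArg Sum.inl h.1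
  · cases h.2
  · cases h.2
  · exact congrArg Sum.inr (MWord.toList_injective (Subtype.ext_iff.mp (Sum.inr_injective h.2)))

def MBasis.toFock (i : MBasis r J L) : FockR r (Fin r × Fin r × L) :=
  PiLp.single 2 i.index (fvec i.toFBasis)

theorem MBasis.orthonormal_toFock : Orthonormal ℂ (MBasis.toFock : MBasis r J L → _) := by
  have hsingle := (orthonormal_fvec (I := Fin r × Fin r × L)).piLpSingle (η := Fin r)
  exact (hsingle.comp _ (MBasis.injective_index_toFBasis (J := J)) :)

end Embedding

section Isometry

variable {r : ℕ} {J : Set (Fin r × Fin r)} {L : Type*}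

variable (r J L) in
noncomputable def mfFockIsometry : MSpace r J L →ₗᵢ[ℂ] FockR r (Fin r × Fin r × L) :=
  MBasis.orthonormal_toFock.orthogonalFamily.linearIsometry

theorem mfFockIsometry_mvec (i : MBasis r J L) : mfFockIsometry r J L (mvec i) = i.toFock := by
  classical
  rw [show (mvec i : MSpace r J L) = lp.single 2 i 1 from rfl, mfFockIsometry,
    OrthogonalFamily.linearIsometry_apply_single, LinearIsometry.toSpanSingleton_apply, one_smul]

theorem mfFockIsometry_vac (q : Fin r) : mfFockIsometry r J L (vac q) = fockDelta q := by
  rw [vac, mfFockIsometry_mvec, fockDelta_eq_single]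
  rfl

theorem mfFockIsometry_comp_mfCreation {b : ℝ} {p q : Fin r} {l : L} {hpq : (p, q) ∈ J}
    {C : MSpace r J L →L[ℂ] MSpace r J L} (hC : IsMFCreation b p q l hpq C)
    {A : FSpace (Fin r × Fin r × L) →L[ℂ] FSpace (Fin r × Fin r × L)}
    (hA : IsFreeCreation (p, q, l) A)
    {T : FockR r (Fin r × Fin r × L) →L[ℂ] FockR r (Fin r × Fin r × L)}
    (hT : ∀ ξ k, tupComp (T ξ) k = if k = p then A (tupComp ξ q) else 0) :
    (mfFockIsometry r J L).toContinuousLinearMap.comp C =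
      (Real.sqrt b : ℂ) • T.comp (mfFockIsometry r J L).toContinuousLinearMap := by
  classical
  refine lp.ext_single_one fun i => ?_
  change mfFockIsometry r J L (C (mvec i)) = (Real.sqrt b : ℂ) • T (mfFockIsometry r J L (mvec i))
  rw [hC.apply_mvec, mfFockIsometry_mvec, MBasis.toFock, PiLp.apply_single_of_apply_eq_ite hT]
  split_ifs with h
  · rw [map_smul, mfFockIsometry_mvec, MBasis.toFock, MBasis.index_cons, MBasis.toFBasis_cons,
      hA.apply_fvec]
    rfl
  · rw [map_zero, smul_zero]

end Isometry

theorem mfCreation_matricial_realization_general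
    (r : ℕ) (L : Type)
    (C : (p q : Fin r) → L → (MSpace r (Set.univ) L →L[ℂ] MSpace r (Set.univ) L))
    (hC : ∀ p q l, IsMFCreation 1 p q l (Set.mem_univ _) (C p q l))
    (ell : (Fin r × Fin r × L) →
      (FSpace (Fin r × Fin r × L) →L[ℂ] FSpace (Fin r × Fin r × L)))
    (hell : ∀ i, IsFreeCreation i (ell i))
    (Lop : (p q : Fin r) → L → (FockR r (Fin r × Fin r × L) →L[ℂ] FockR r (Fin r × Fin r × L)))
    (hLop : ∀ p q l ξ k,
      tupComp (Lop p q l ξ) k = if k = p then (ell (p, q, l)) (tupComp ξ q) else 0) :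
    ∃ τ : MSpace r (Set.univ) L →ₗᵢ[ℂ] FockR r (Fin r × Fin r × L),
      (∀ q : Fin r, τ (vac q) = fockDelta q) ∧
      (∀ (p q : Fin r) (l : L) (x : MSpace r (Set.univ) L),
        τ ((C p q l) x) = (Lop p q l) (τ x)) := by
  refine ⟨mfFockIsometry r Set.univ L, mfFockIsometry_vac, fun p q l x => ?_⟩
  have h := mfFockIsometry_comp_mfCreation (hC p q l) (hell (p, q, l)) (hLop p q l)
  simpa using DFunLike.congr_fun h x

/-- with `J = [r]×[r]` and all covariances equal to `1`, there is a linear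
isometry `τ : M → F^{⊕r}` sending `Ω_q` to the tuple `δ^{(q)}` and intertwining each
matricially free creation operator `℘_{p,q}(l)` with the matrix-style operator
`L_{p,q}(l) = ℓ(p,q,l) ⊗ e(p,q)` on `F^{⊕r}`. -/
theorem mfCreation_matricial_realization
    (r : ℕ) (hr : 1 ≤ r) (L : Type) [Finite L]
    (C : (p q : Fin r) → L → (MSpace r (Set.univ) L →L[ℂ] MSpace r (Set.univ) L))
    (hC : ∀ p q l, IsMFCreation 1 p q l (Set.mem_univ _) (C p q l))
    (ell : (Fin r × Fin r × L) →
      (FSpace (Fin r × Fin r × L) →L[ℂ] FSpace (Fin r × Fin r × L)))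
    (hell : ∀ i, IsFreeCreation i (ell i))
    (Lop : (p q : Fin r) → L → (FockR r (Fin r × Fin r × L) →L[ℂ] FockR r (Fin r × Fin r × L)))
    (hLop : ∀ p q l ξ k,
      tupComp (Lop p q l ξ) k = if k = p then (ell (p, q, l)) (tupComp ξ q) else 0) :
    ∃ τ : MSpace r (Set.univ) L →ₗᵢ[ℂ] FockR r (Fin r × Fin r × L),
      (∀ q : Fin r, τ (vac q) = fockDelta q) ∧
      (∀ (p q : Fin r) (l : L) (x : MSpace r (Set.univ) L),
        τ ((C p q l) x) = (Lop p q l) (τ x)) :=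
  mfCreation_matricial_realization_general r L C hC ell hell Lop hLop
end

section
/- Suppose U = {u} is a singleton with covariances b_{p,q} := b_{p,q}(u) ≥ 0, let B = (b_{p,q}) be the corresponding r×r real matrix, and let ζ = Σ_{p,q ∈ [r]} ζ_{p,q}(u). For an r×r complex matrix A, let 𝒟(A) denote the diagonal matrix whose (q,q) entry is Σ_{p=1}^r A_{p,q}. For m ≥ 0 and ε = (ε₁,…,ε_{2m}) ∈ {1,*}^{2m}, let C_m(ε) denote the diagonal r×r complex matrix whose (q,q) entry is Ψ_q(ζ^{ε₁}⋯ζ^{ε_{2m}}), with C₀ = I. Then: (i) Ψ_q(ζ^{ε₁}⋯ζ^{ε_k}) = 0 for every odd k, every q ∈ [r] and all ε_j ∈ {1,*}; (ii) for every m ≥ 1 and all ε₁,…,ε_{2m} ∈ {1,*}: C_m(ε₁,…,ε_{2m}) = Σ_{j=0}^{m−1} [ε₁ ≠ ε_{2j+2}] · 𝒟( C_j(ε₂,…,ε_{2j+1}) · B · C_{m−1−j}(ε_{2j+3},…,ε_{2m}) ), where [·] equals 1 if the condition holds and 0 otherwise. -/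
/-- `x^ε` for `ε ∈ {1, *}`: `x^1 = x` (encoded `true`) and `x^* = adjoint x` (encoded `false`). -/
noncomputable def sOp {H : Type*} [NormedAddCommGroup H] [InnerProductSpace ℂ H]
    [CompleteSpace H] (ε : Bool) (x : H →L[ℂ] H) : H →L[ℂ] H :=
  if ε then x else ContinuousLinearMap.adjoint x

set_option synthInstance.maxHeartbeats 400000
set_option maxHeartbeats 1000000

noncomputable section

/-- The sum `ζ = Σ_{p,q} ζ_{p,q}` of the matricial `R`-circular operators. -/
def zetaSum {r : ℕ}
    (C : (p q : Fin r) → (Unit ⊕ Unit) →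
      (MSpace r Set.univ (Unit ⊕ Unit) →L[ℂ] MSpace r Set.univ (Unit ⊕ Unit))) :
    MSpace r Set.univ (Unit ⊕ Unit) →L[ℂ] MSpace r Set.univ (Unit ⊕ Unit) :=
  ∑ pq : Fin r × Fin r,
    (C pq.1 pq.2 (Sum.inl ()) + ContinuousLinearMap.adjoint (C pq.2 pq.1 (Sum.inr ())))

/-- The diagonal matrix of moments `C_m(ε)` with `(q,q)` entry `Ψ_q(ζ^{ε₁}⋯ζ^{ε_k})`. -/
def momentMat {r : ℕ}
    (C : (p q : Fin r) → (Unit ⊕ Unit) →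
      (MSpace r Set.univ (Unit ⊕ Unit) →L[ℂ] MSpace r Set.univ (Unit ⊕ Unit)))
    (k : ℕ) (ε : Fin k → Bool) : Matrix (Fin r) (Fin r) ℂ :=
  Matrix.diagonal (fun q => PsiM q (List.ofFn (fun j => sOp (ε j) (zetaSum C))).prod)

/-- The map `𝒟`: `𝒟(A)` is the diagonal matrix with `(q,q)` entry `Σ_p A_{p,q}`. -/
def Dmap {r : ℕ} (A : Matrix (Fin r) (Fin r) ℂ) : Matrix (Fin r) (Fin r) ℂ :=
  Matrix.diagonal (fun q => ∑ p, A p q)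

end

/-!
On coefficient vectors in the canonical basis, `ζ^ε` prepends a letter labelled `creLabel ε` or
deletes a first letter labelled `creLabel !ε`, with weight `√b` in both cases. So
`Ψ_q(ζ^{ε₁} ⋯ ζ^{εₖ})` is a weighted count of walks on the basis from `Ω_q` back to `Ω_q`.
Every step changes the number of letters by one and keeps the second index of the last letter,
hence odd moments vanish and `Ω_q` is the only vacuum such a walk can visit.

The last step `ζ^{ε₁}` of a closed walk deletes a one-letter word `((p, q), creLabel !ε₁)`.
Cutting the walk at its last visit to `Ω_q` (the identity `List.mul_prod_map_eq_of_add_eq_one`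
for the projections `P`, `Q` onto vacua and words) leaves a closed walk at `Ω_q`, one step
`ζ^{ε_j}` creating that letter, which forces `ε_j ≠ ε₁`, and a walk on words ending with that
letter. Removing the letter identifies the latter with closed walks at `Ω_p` (`appendLetter`), and
the two weights `√b_{pq}` combine to `b_{pq}`.
-/

theorem List.mul_prod_map_eq_of_add_eq_one {α R : Type*} [Semiring R] {P Q : R}
    (hPQ : P + Q = 1) (f : α → R) (d : α) (l : List α) :
    Q * (l.map f).prod = (l.map (Q * f ·)).prod * Q +
      ∑ k ∈ Finset.range l.length,
        ((l.take k).map (Q * f ·)).prod * Q * f (l.getD k d) * P *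
          ((l.drop (k + 1)).map f).prod := by
  induction l with
  | nil => simp
  | cons a l ih =>
    have hsplit : Q * ((a :: l).map f).prod =
        Q * f a * P * (l.map f).prod + Q * f a * (Q * (l.map f).prod) :=
      calc Q * ((a :: l).map f).prod = Q * f a * ((P + Q) * (l.map f).prod) := by
            rw [hPQ, one_mul, List.map_cons, List.prod_cons, mul_assoc]
        _ = _ := by noncomm_ring
    rw [hsplit, ih, List.length_cons, Finset.sum_range_succ']
    simp only [List.map_cons, List.prod_cons, List.take_zero, List.take_succ_cons, List.map_nil,
      List.prod_nil, one_mul, List.getD_cons_zero, List.getD_cons_succ, List.drop_succ_cons,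
      List.drop_zero, mul_add, Finset.mul_sum, mul_assoc]
    abel

theorem List.take_drop_ofFn {α : Type*} {n : ℕ} (f : Fin n → α) (a len : ℕ) (hle : a + len ≤ n)
    (g : Fin len → α) (hg : ∀ i : Fin len, g i = f ⟨a + i, by have := i.isLt; omega⟩) :
    ((List.ofFn f).drop a).take len = List.ofFn g := by
  apply List.ext_getElem
  · simp only [List.length_take, List.length_drop, List.length_ofFn]
    omega
  · intro i _ _
    simp only [List.getElem_take, List.getElem_drop, List.getElem_ofFn, hg]

theorem Finset.sum_range_two_mul_add_one_of_odd {M : Type*} [AddCommMonoid M] (f : ℕ → M)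
    (hf : ∀ k, Odd k → f k = 0) (n : ℕ) :
    ∑ k ∈ Finset.range (2 * n + 1), f k = ∑ j ∈ Finset.range (n + 1), f (2 * j) := by
  induction n with
  | zero => simp
  | succ n ih =>
    rw [show 2 * (n + 1) + 1 = 2 * n + 1 + 1 + 1 by ring, Finset.sum_range_succ,
      Finset.sum_range_succ, ih, hf _ (odd_two_mul_add_one n), add_zero,
      Finset.sum_range_succ (n := n + 1), mul_add_one]

theorem Matrix.sum_ite_diagonal {ι n α : Type*} [DecidableEq n] [AddCommMonoid α] (s : Finset ι)
    (c : ι → Prop) [DecidablePred c] (f : ι → n → α) :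
    ∑ x ∈ s, (if c x then Matrix.diagonal (f x) else 0) =
      Matrix.diagonal fun q => ∑ x ∈ s, if c x then f x q else 0 := by
  ext i j
  by_cases hij : i = j
  · subst hij
    simp only [Matrix.sum_apply, apply_ite (fun M : Matrix n n α => M i i),
      Matrix.diagonal_apply_eq, Matrix.zero_apply]
  · simp only [Matrix.sum_apply, apply_ite (fun M : Matrix n n α => M i j),
      Matrix.diagonal_apply_ne _ hij, Matrix.zero_apply, ite_self, Finset.sum_const_zero]

namespace MatricialCircular

attribute [local instance] Classical.propDecidable

open Sum

open scoped InnerProductSpace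

section Words

variable {r : ℕ} {L : Type*}

abbrev Word (r : ℕ) (L : Type*) := MWord r Set.univ L

abbrev Index (r : ℕ) (L : Type*) := MBasis r Set.univ L

def startIdx : Index r L → Fin r
  | inl t => t
  | inr w => w.head.1.1

def push (x : MLetter r L) : (i : Index r L) → startIdx i = x.1.2 → Word r L
  | inl _, _ => MWord.single x (Set.mem_univ _)
  | inr w, h => MWord.cons x (Set.mem_univ _) w h.symm

def pop : Word r L → Index r L
  | ⟨x, [], _, _, _⟩ => inl x.1.2
  | ⟨_, y :: t, _, _, hc⟩ => inr ⟨y, t, Set.mem_univ _, fun _ _ => Set.mem_univ _, hc.tail⟩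

theorem head_push (x : MLetter r L) (i : Index r L) (h : startIdx i = x.1.2) :
    (push x i h).head = x := by
  cases i <;> rfl

theorem pop_push (x : MLetter r L) (i : Index r L) (h : startIdx i = x.1.2) :
    pop (push x i h) = i := by
  cases i with
  | inl t => cases h; rfl
  | inr w => rfl

theorem startIdx_pop (y : Word r L) : startIdx (pop y) = y.head.1.2 := by
  obtain ⟨_, _ | ⟨_, _⟩, _, _, hc⟩ := y
  · rfl
  · exact (List.isChain_cons_cons.mp hc).1.symm

theorem push_pop (y : Word r L) : push y.head (pop y) (startIdx_pop y) = y := by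
  obtain ⟨_, _ | ⟨_, _⟩, _, _, _⟩ := y <;> rfl

theorem push_eq_iff {x : MLetter r L} {i : Index r L} {h : startIdx i = x.1.2} {y : Word r L} :
    push x i h = y ↔ y.head = x ∧ pop y = i := by
  constructor
  · rintro rfl
    exact ⟨head_push x i h, pop_push x i h⟩
  · rintro ⟨rfl, rfl⟩
    exact push_pop y

def lastLetter (w : Word r L) : MLetter r L := (w.head :: w.tail).getLast (List.cons_ne_nil _ _)

def endIdx : Index r L → Fin r
  | inl t => t
  | inr w => (lastLetter w).1.2

def dropLastLetter : Word r L → Index r L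
  | ⟨x, [], _, _, _⟩ => inl x.1.1
  | ⟨x, y :: t, _, _, hc⟩ =>
    inr ⟨x, (y :: t).dropLast, Set.mem_univ _, fun _ _ => Set.mem_univ _, by
      have hc' := hc.dropLast
      rwa [List.dropLast_cons_cons] at hc'⟩

def wordLength : Index r L → ℕ
  | inl _ => 0
  | inr w => w.tail.length + 1

theorem lastLetter_push_inl (x : MLetter r L) (t : Fin r) (h : startIdx (inl t) = x.1.2) :
    lastLetter (push x (inl t) h) = x := rfl

theorem lastLetter_push_inr (x : MLetter r L) (w : Word r L) (h : startIdx (inr w) = x.1.2) :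
    lastLetter (push x (inr w) h) = lastLetter w :=
  List.getLast_cons _

theorem startIdx_dropLastLetter (w : Word r L) : startIdx (dropLastLetter w) = w.head.1.1 := by
  obtain ⟨_, _ | ⟨_, _⟩, _, _, _⟩ := w <;> rfl

theorem dropLastLetter_push_inl (x : MLetter r L) (t : Fin r) (h : startIdx (inl t) = x.1.2) :
    dropLastLetter (push x (inl t) h) = inl x.1.1 := rfl

theorem dropLastLetter_push_inr (x : MLetter r L) (w : Word r L) (h : startIdx (inr w) = x.1.2) :
    dropLastLetter (push x (inr w) h) =
      inr (push x (dropLastLetter w) ((startIdx_dropLastLetter w).trans h)) := by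
  obtain ⟨_, _ | ⟨_, _⟩, _, _, _⟩ := w <;> rfl

theorem endIdx_push (x : MLetter r L) (i : Index r L) (h : startIdx i = x.1.2) :
    endIdx (inr (push x i h)) = endIdx i := by
  cases i with
  | inl t => exact h.symm
  | inr w => exact congrArg (·.1.2) (lastLetter_push_inr x w h)

theorem endIdx_pop (y : Word r L) : endIdx (pop y) = endIdx (inr y) := by
  conv_rhs => rw [← push_pop y]
  exact (endIdx_push _ _ _).symm

theorem wordLength_push (x : MLetter r L) (i : Index r L) (h : startIdx i = x.1.2) :
    wordLength (inr (push x i h)) = wordLength i + 1 := by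
  cases i <;> rfl

theorem wordLength_pop (y : Word r L) : wordLength (pop y) + 1 = wordLength (inr y) := by
  conv_rhs => rw [← push_pop y]
  exact (wordLength_push _ _ _).symm

end Words

section Projections

variable {α β : Type*}

def inlProj : Module.End ℂ (α ⊕ β → ℂ) where
  toFun v := Sum.elim (fun a => v (inl a)) 0
  map_add' v w := by funext i; cases i <;> simp
  map_smul' c v := by funext i; cases i <;> simp

def inrProj : Module.End ℂ (α ⊕ β → ℂ) where
  toFun v := Sum.elim 0 (fun a => v (inr a))
  map_add' v w := by funext i; cases i <;> simp
  map_smul' c v := by funext i; cases i <;> simp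

@[simp] theorem inlProj_inl (v : α ⊕ β → ℂ) (a : α) : inlProj v (inl a) = v (inl a) := rfl
@[simp] theorem inlProj_inr (v : α ⊕ β → ℂ) (a : β) : inlProj v (inr a) = 0 := rfl
@[simp] theorem inrProj_inl (v : α ⊕ β → ℂ) (a : α) : inrProj v (inl a) = 0 := rfl
@[simp] theorem inrProj_inr (v : α ⊕ β → ℂ) (a : β) : inrProj v (inr a) = v (inr a) := rfl

theorem inlProj_add_inrProj : (inlProj + inrProj : Module.End ℂ (α ⊕ β → ℂ)) = 1 := by
  ext v i
  cases i <;> simp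

end Projections

noncomputable section Coefficients

variable {r : ℕ} (b : Fin r → Fin r → ℝ)

abbrev Label := Unit ⊕ Unit

/-- `ζ^ε` creates letters labelled `creLabel ε` and annihilates letters labelled `creLabel !ε`;
`inl ()` and `inr ()` stand for the paper's `u′` and `u″`. -/
def creLabel (ε : Bool) : Label := if ε then inl () else inr ()

theorem creLabel_eq_creLabel_not_iff {ε ε' : Bool} : creLabel ε = creLabel !ε' ↔ ε ≠ ε' := by
  cases ε <;> cases ε' <;> simp [creLabel]

def sqrtCov (p q : Fin r) : ℂ := (√(b p q) : ℂ)

theorem sqrtCov_mul_self {b : Fin r → Fin r → ℝ} (hb : ∀ p q, 0 ≤ b p q) (p q : Fin r) :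
    sqrtCov b p q * sqrtCov b p q = b p q := by
  rw [sqrtCov, ← Complex.ofReal_mul, Real.mul_self_sqrt (hb p q)]

/-- If `v` is the coefficient vector of `u`, then `zetaCoeff b ε v` is that of `ζ^ε u`
(`coe_sOp_zetaSum_apply`). -/
def zetaCoeff (ε : Bool) : Module.End ℂ (Index r Label → ℂ) where
  toFun v i := ∑ p, sqrtCov b p (startIdx i) * v (inr (push ((p, startIdx i), creLabel !ε) i rfl)) +
    Sum.elim (fun _ => 0) (fun y => if y.head.2 = creLabel ε then
      sqrtCov b y.head.1.1 y.head.1.2 * v (pop y) else 0) i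
  map_add' v w := by
    funext i
    cases i <;> simp only [Pi.add_apply, Sum.elim_inl, Sum.elim_inr, mul_add,
      Finset.sum_add_distrib] <;> (try split_ifs) <;> ring
  map_smul' c v := by
    funext i
    cases i <;> simp [Finset.mul_sum, mul_add, mul_left_comm c]

theorem zetaCoeff_inl (ε : Bool) (v : Index r Label → ℂ) (t : Fin r) :
    zetaCoeff b ε v (inl t) =
      ∑ p, sqrtCov b p t * v (inr (MWord.single ((p, t), creLabel !ε) (Set.mem_univ _))) :=
  add_zero _

theorem zetaCoeff_inr (ε : Bool) (v : Index r Label → ℂ) (y : Word r Label) :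
    zetaCoeff b ε v (inr y) =
      ∑ p, sqrtCov b p y.head.1.1 * v (inr (push ((p, y.head.1.1), creLabel !ε) (inr y) rfl)) +
      if y.head.2 = creLabel ε then sqrtCov b y.head.1.1 y.head.1.2 * v (pop y) else 0 :=
  rfl

theorem zetaCoeff_push (ε : Bool) (v : Index r Label → ℂ) (x : MLetter r Label)
    (i : Index r Label) (h : startIdx i = x.1.2) :
    zetaCoeff b ε v (inr (push x i h)) =
      ∑ p, sqrtCov b p x.1.1 * v (inr (push ((p, x.1.1), creLabel !ε) (inr (push x i h))
          (show startIdx (inr (push x i h)) = x.1.1 from congrArg (·.1.1) (head_push x i h)))) +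
      if x.2 = creLabel ε then sqrtCov b x.1.1 x.1.2 * v i else 0 := by
  cases i with
  | inl t => cases h; rfl
  | inr w => rfl

theorem zetaCoeff_apply_eq_zero {S T : Index r Label → Prop} {v : Index r Label → ℂ}
    (hv : ∀ j, ¬S j → v j = 0) (hpush : ∀ x i h, ¬T i → ¬S (inr (push x i h)))
    (hpop : ∀ y, ¬T (inr y) → ¬S (pop y)) (ε : Bool) {i : Index r Label} (hi : ¬T i) :
    zetaCoeff b ε v i = 0 := by
  cases i with
  | inl t =>
    rw [zetaCoeff_inl]
    exact Finset.sum_eq_zero fun p _ => mul_eq_zero_of_right _ (hv _ (hpush _ (inl t) rfl hi))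
  | inr y =>
    rw [zetaCoeff_inr, hv _ (hpop y hi), mul_zero, ite_self, add_zero]
    exact Finset.sum_eq_zero fun p _ => mul_eq_zero_of_right _ (hv _ (hpush _ (inr y) rfl hi))

theorem zetaCoeff_single_vac (ε : Bool) (q : Fin r) :
    zetaCoeff b ε (Pi.single (inl q) 1) = ∑ s, sqrtCov b s q •
      Pi.single (inr (MWord.single ((s, q), creLabel ε) (Set.mem_univ _))) 1 := by
  funext j
  rw [Finset.sum_apply]
  rcases j with t | y
  · simp [zetaCoeff_inl]
  obtain ⟨x, i, h, rfl⟩ : ∃ x i h, push x i h = y := ⟨_, _, _, push_pop y⟩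
  have hsingle : ∀ c : MLetter r Label,
      push x i h = MWord.single c (Set.mem_univ _) ↔ c = x ∧ i = inl c.1.2 := fun c => by
    rw [push_eq_iff]
    exact and_congr Iff.rfl eq_comm
  rw [zetaCoeff_push]
  simp only [Pi.smul_apply, Pi.single_apply, Sum.inr.injEq, hsingle, reduceCtorEq, if_false,
    mul_zero, Finset.sum_const_zero, zero_add]
  by_cases hi : i = inl q
  · subst hi
    obtain ⟨⟨x₁, x₂⟩, l⟩ := x
    obtain rfl : q = x₂ := h
    by_cases hl : l = creLabel ε <;>
      simp only [hl, ↓reduceIte, mul_one, eq_comm, Prod.ext_iff, and_true, and_false, smul_eq_mul,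
        mul_ite, mul_zero, Finset.sum_ite_eq, Finset.mem_univ, Finset.sum_const_zero]
  · simp only [hi, ↓reduceIte, mul_zero, ite_self, and_false, smul_eq_mul, Finset.sum_const_zero]

def zetaWordCoeff (εs : List Bool) : Module.End ℂ (Index r Label → ℂ) :=
  (εs.map (zetaCoeff b)).prod

/-- `Ψ_q(ζ^{ε₁} ⋯ ζ^{εₖ})` for `εs = [ε₁, …, εₖ]` (`PsiM_ofFn_eq_moment`). -/
def moment (q : Fin r) (εs : List Bool) : ℂ :=
  zetaWordCoeff b εs (Pi.single (inl q) 1) (inl q)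

theorem zetaWordCoeff_vac_apply_of_endIdx_ne (q : Fin r) (εs : List Bool) {i : Index r Label}
    (hi : endIdx i ≠ q) : zetaWordCoeff b εs (Pi.single (inl q) 1) i = 0 := by
  induction εs generalizing i with
  | nil => exact Pi.single_eq_of_ne (by rintro rfl; exact hi rfl) 1
  | cons ε εs ih =>
    refine zetaCoeff_apply_eq_zero (S := (endIdx · = q)) (T := (endIdx · = q)) b
      (fun j hj => ih hj) (fun x i h hi => ?_) (fun y hy => ?_) ε hi
    · rwa [endIdx_push]
    · rwa [endIdx_pop]

theorem zetaWordCoeff_vac_apply_of_wordLength (q : Fin r) (εs : List Bool) {i : Index r Label}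
    (hi : wordLength i % 2 ≠ εs.length % 2) : zetaWordCoeff b εs (Pi.single (inl q) 1) i = 0 := by
  induction εs generalizing i with
  | nil => exact Pi.single_eq_of_ne (by rintro rfl; exact hi rfl) 1
  | cons ε εs ih =>
    refine zetaCoeff_apply_eq_zero (S := (wordLength · % 2 = εs.length % 2))
      (T := (wordLength · % 2 = (εs.length + 1) % 2)) b
      (fun j hj => ih hj) (fun x i h hi => ?_) (fun y hy => ?_) ε hi
    · rw [wordLength_push]
      omega
    · have := wordLength_pop y
      omega

theorem moment_eq_zero_of_odd (q : Fin r) {εs : List Bool} (h : Odd εs.length) :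
    moment b q εs = 0 :=
  zetaWordCoeff_vac_apply_of_wordLength b q εs (by simp [wordLength, Nat.odd_iff.mp h])

theorem inlProj_zetaWordCoeff_vac (q : Fin r) (εs : List Bool) :
    inlProj (zetaWordCoeff b εs (Pi.single (inl q) 1)) = moment b q εs • Pi.single (inl q) 1 := by
  funext j
  rcases j with t | y
  · by_cases ht : t = q
    · subst ht
      simp [moment]
    · rw [inlProj_inl, zetaWordCoeff_vac_apply_of_endIdx_ne b q εs (i := inl t) ht, Pi.smul_apply,
        Pi.single_eq_of_ne (fun h => ht (Sum.inl_injective h)), smul_zero]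
  · simp

end Coefficients

noncomputable section FirstReturn

variable {r : ℕ} (b : Fin r → Fin r → ℝ)

/-- The coefficients of the vector obtained by appending the letter `c` on the right of every
basis index: `Ω_{c.1.1}` goes to the word `c`, and a word `w` ending at `c.1.1` to `w c`. -/
def appendLetter {L : Type*} (c : MLetter r L) (v : Index r L → ℂ) : Index r L → ℂ :=
  Sum.elim 0 (fun y => if lastLetter y = c then v (dropLastLetter y) else 0)

theorem appendLetter_inr {L : Type*} (c : MLetter r L) (v : Index r L → ℂ) (y : Word r L) :
    appendLetter c v (inr y) = if lastLetter y = c then v (dropLastLetter y) else 0 := rfl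

theorem appendLetter_push_inl {L : Type*} (c : MLetter r L) (v : Index r L → ℂ)
    (x : MLetter r L) (t : Fin r) (h : startIdx (inl t) = x.1.2) :
    appendLetter c v (inr (push x (inl t) h)) = if x = c then v (inl x.1.1) else 0 :=
  if_congr Iff.rfl rfl rfl

theorem appendLetter_push_inr {L : Type*} (c : MLetter r L) (v : Index r L → ℂ)
    (x : MLetter r L) (w : Word r L) (h : startIdx (inr w) = x.1.2) :
    appendLetter c v (inr (push x (inr w) h)) = if lastLetter w = c then
      v (inr (push x (dropLastLetter w) ((startIdx_dropLastLetter w).trans h))) else 0 := by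
  simp only [appendLetter, Sum.elim_inr, lastLetter_push_inr, dropLastLetter_push_inr]

theorem appendLetter_single {L : Type*} (c x : MLetter r L) (v : Index r L → ℂ) :
    appendLetter c v (inr (MWord.single x (Set.mem_univ _))) =
      if x = c then v (inl x.1.1) else 0 :=
  appendLetter_push_inl c v x x.1.2 rfl

theorem inrProj_zetaCoeff_appendLetter (c : MLetter r Label) (ε : Bool)
    (v : Index r Label → ℂ) :
    inrProj (zetaCoeff b ε (appendLetter c v)) = appendLetter c (zetaCoeff b ε v) := by
  funext j
  rcases j with t | y
  · rfl
  obtain ⟨x, i, h, rfl⟩ : ∃ x i h, push x i h = y := ⟨_, _, _, push_pop y⟩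
  rw [inrProj_inr, zetaCoeff_push]
  rcases i with t | w
  · have hvac : appendLetter c v (inl t) = 0 := rfl
    simp only [hvac, mul_zero, ite_self, add_zero, appendLetter_push_inl, appendLetter_push_inr,
      lastLetter_push_inl, dropLastLetter_push_inl, zetaCoeff_inl]
    by_cases hx : x = c
    · simp only [hx, ↓reduceIte]
      rfl
    · simp only [hx, ↓reduceIte, mul_zero, Finset.sum_const_zero]
  · simp only [lastLetter_push_inr, dropLastLetter_push_inr, appendLetter_inr, zetaCoeff_push]
    by_cases hw : lastLetter w = c <;>
      simp only [hw, ↓reduceIte, mul_zero, Finset.sum_const_zero, ite_self, add_zero]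

theorem inrProj_single_single_eq_appendLetter {L : Type*} (c : MLetter r L) :
    inrProj (Pi.single (inr (MWord.single c (Set.mem_univ _))) 1 : Index r L → ℂ) =
      appendLetter c (Pi.single (inl c.1.1) 1) := by
  funext j
  rcases j with t | y
  · rfl
  obtain ⟨x, i, h, rfl⟩ : ∃ x i h, push x i h = y := ⟨_, _, _, push_pop y⟩
  rw [inrProj_inr]
  rcases i with t | w
  · rw [appendLetter_push_inl]
    by_cases hx : x = c
    · subst hx
      rw [if_pos rfl, Pi.single_eq_same]
      exact Pi.single_eq_same _ _
    · rw [if_neg hx]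
      exact Pi.single_eq_of_ne (fun he => hx (congrArg MWord.head (Sum.inr_injective he))) _
  · rw [appendLetter_push_inr, Pi.single_eq_of_ne Sum.inr_ne_inl, ite_self]
    exact Pi.single_eq_of_ne
      (fun he => List.cons_ne_nil _ _ (congrArg MWord.tail (Sum.inr_injective he))) _

theorem prod_inrProj_mul_zetaCoeff_single (c : MLetter r Label) (εs : List Bool) :
    ((εs.map fun ε => inrProj * zetaCoeff b ε).prod : Module.End ℂ (Index r Label → ℂ))
        (inrProj (Pi.single (inr (MWord.single c (Set.mem_univ _))) 1)) =
      appendLetter c (zetaWordCoeff b εs (Pi.single (inl c.1.1) 1)) := by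
  induction εs with
  | nil => exact inrProj_single_single_eq_appendLetter c
  | cons ε εs ih =>
    rw [List.map_cons, List.prod_cons, Module.End.mul_apply, ih, Module.End.mul_apply,
      inrProj_zetaCoeff_appendLetter]
    rfl

theorem prod_inrProj_mul_zetaCoeff_vac_apply (p q : Fin r) (l : Label) (ε' : Bool)
    (εs : List Bool) :
    ((εs.map fun ε => inrProj * zetaCoeff b ε).prod : Module.End ℂ (Index r Label → ℂ))
        (inrProj (zetaCoeff b ε' (Pi.single (inl q) 1)))
        (inr (MWord.single ((p, q), l) (Set.mem_univ _))) =
      if creLabel ε' = l then sqrtCov b p q * moment b p εs else 0 := by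
  rw [zetaCoeff_single_vac, map_sum, map_sum, Finset.sum_apply]
  simp only [map_smul, Pi.smul_apply, prod_inrProj_mul_zetaCoeff_single, appendLetter_single]
  by_cases hl : creLabel ε' = l
  · simp only [hl, Prod.ext_iff, and_true, smul_eq_mul, mul_ite, mul_zero, Finset.sum_ite_eq,
      Finset.mem_univ, ↓reduceIte, moment]
  · simp only [Prod.ext_iff, Ne.symm hl, hl, and_false, if_false, smul_zero, Finset.sum_const_zero]

theorem zetaWordCoeff_vac_apply_single (p q : Fin r) (l : Label) (εs : List Bool) :
    zetaWordCoeff b εs (Pi.single (inl q) 1) (inr (MWord.single ((p, q), l) (Set.mem_univ _))) =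
      ∑ k ∈ Finset.range εs.length, if creLabel (εs.getD k false) = l then
        sqrtCov b p q * moment b p (εs.take k) * moment b q (εs.drop (k + 1)) else 0 := by
  have hdecomp := congrArg (fun T : Module.End ℂ (Index r Label → ℂ) =>
    T (Pi.single (inl q) 1) (inr (MWord.single ((p, q), l) (Set.mem_univ _))))
    (List.mul_prod_map_eq_of_add_eq_one inlProj_add_inrProj (zetaCoeff b) false εs)
  have hvac : inrProj (Pi.single (inl q) 1 : Index r Label → ℂ) = 0 := by
    funext j
    rcases j with t | y <;> simp
  simp only [Module.End.mul_apply, LinearMap.add_apply, hvac, map_zero, zero_add,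
    LinearMap.sum_apply, Finset.sum_apply] at hdecomp
  refine hdecomp.trans (Finset.sum_congr rfl fun k _ => ?_)
  rw [show (List.map (zetaCoeff b) (List.drop (k + 1) εs)).prod = zetaWordCoeff b (εs.drop (k + 1))
    from rfl, inlProj_zetaWordCoeff_vac, map_smul, map_smul, map_smul, Pi.smul_apply,
    prod_inrProj_mul_zetaCoeff_vac_apply, smul_eq_mul, mul_ite, mul_zero]
  exact if_congr Iff.rfl (by ring) rfl

end FirstReturn

section Moments

variable {r : ℕ} {b : Fin r → Fin r → ℝ}

theorem moment_cons (hb : ∀ p q, 0 ≤ b p q) (q : Fin r) (ε₀ : Bool) (εs : List Bool) :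
    moment b q (ε₀ :: εs) = ∑ k ∈ Finset.range εs.length, if εs.getD k false ≠ ε₀ then
      ∑ p, (b p q : ℂ) * moment b p (εs.take k) * moment b q (εs.drop (k + 1)) else 0 := by
  calc moment b q (ε₀ :: εs)
      = ∑ p, sqrtCov b p q * zetaWordCoeff b εs (Pi.single (inl q) 1)
          (inr (MWord.single ((p, q), creLabel !ε₀) (Set.mem_univ _))) := zetaCoeff_inl ..
    _ = _ := by
      simp only [zetaWordCoeff_vac_apply_single, Finset.mul_sum]
      rw [Finset.sum_comm]
      refine Finset.sum_congr rfl fun k _ => ?_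
      simp only [creLabel_eq_creLabel_not_iff, mul_ite, mul_zero]
      split_ifs
      · refine Finset.sum_congr rfl fun p _ => ?_
        rw [← sqrtCov_mul_self hb]
        ring
      · exact Finset.sum_const_zero

theorem moment_cons_of_length_eq (hb : ∀ p q, 0 ≤ b p q) (q : Fin r) (ε₀ : Bool)
    {εs : List Bool} {n : ℕ} (hlen : εs.length = 2 * n + 1) :
    moment b q (ε₀ :: εs) = ∑ j ∈ Finset.range (n + 1), if εs.getD (2 * j) false ≠ ε₀ then
      ∑ p, (b p q : ℂ) * moment b p (εs.take (2 * j)) * moment b q (εs.drop (2 * j + 1))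
      else 0 := by
  rw [moment_cons hb, hlen, Finset.sum_range_two_mul_add_one_of_odd]
  intro k hk
  have hodd : Odd (εs.take k).length := by
    rw [List.length_take, hlen]
    rcases le_total k (2 * n + 1) with h | h
    · rwa [min_eq_left h]
    · rw [min_eq_right h]
      exact odd_two_mul_add_one n
  simp only [moment_eq_zero_of_odd b _ hodd, mul_zero, zero_mul, Finset.sum_const_zero, ite_self]

theorem moment_ofFn_two_mul (hb : ∀ p q, 0 ≤ b p q) (q : Fin r) {m : ℕ} (hm : 1 ≤ m)
    (ε : Fin (2 * m) → Bool) :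
    moment b q (List.ofFn ε) = ∑ j ∈ (Finset.range m).attach,
      if ε ⟨0, by omega⟩ ≠ ε ⟨2 * j + 1, by have := Finset.mem_range.mp j.2; omega⟩ then
        ∑ p, moment b p (List.ofFn fun i : Fin (2 * j) =>
            ε ⟨i + 1, by have := Finset.mem_range.mp j.2; omega⟩) * b p q *
          moment b q (List.ofFn fun i : Fin (2 * (m - 1 - j)) =>
            ε ⟨i + 2 * j + 2, by have := Finset.mem_range.mp j.2; omega⟩)
      else 0 := by
  obtain ⟨n, rfl⟩ : ∃ n, m = n + 1 := ⟨m - 1, by omega⟩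
  set εs := List.ofFn fun i : Fin (2 * n + 1) => ε i.succ
  have hlen : εs.length = 2 * n + 1 := List.length_ofFn
  rw [show List.ofFn ε = ε 0 :: εs from List.ofFn_succ, moment_cons_of_length_eq hb _ _ hlen,
    ← Finset.sum_attach]
  refine Finset.sum_congr rfl fun j _ => ?_
  have hj := Finset.mem_range.mp j.2
  have hget : εs.getD (2 * j) false = ε ⟨2 * j + 1, by omega⟩ := by
    rw [List.getD_eq_getElem _ _ (by omega), List.getElem_ofFn]
    rfl
  have htake : εs.take (2 * j) = List.ofFn fun i : Fin (2 * j) => ε ⟨i + 1, by omega⟩ := by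
    have := List.take_drop_ofFn (fun i : Fin (2 * n + 1) => ε i.succ) 0 (2 * j) (by omega)
      (fun i : Fin (2 * j) => ε ⟨i + 1, by omega⟩) (fun i => congrArg ε (Fin.ext (by simp)))
    rwa [List.drop_zero] at this
  have hdrop : εs.drop (2 * j + 1) =
      List.ofFn fun i : Fin (2 * (n + 1 - 1 - j)) => ε ⟨i + 2 * j + 2, by omega⟩ := by
    rw [← List.take_drop_ofFn (fun i : Fin (2 * n + 1) => ε i.succ) (2 * j + 1) _ (by omega)
      (fun i : Fin (2 * (n + 1 - 1 - j)) => ε ⟨i + 2 * j + 2, by omega⟩)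
      (fun i => congrArg ε (Fin.ext (by simp only [Fin.val_succ]; omega)))]
    exact (List.take_of_length_le (by rw [List.length_drop, hlen]; omega)).symm
  rw [hget, htake, hdrop]
  exact if_congr ne_comm (Finset.sum_congr rfl fun p _ => by ring) rfl

end Moments

section FockSpace

variable {r : ℕ} {J : Set (Fin r × Fin r)} {L : Type*}

theorem coe_mvec (i : MBasis r J L) : ⇑(mvec i : MSpace r J L) = Pi.single i 1 := by
  unfold mvec
  convert lp.coeFn_single (E := fun _ => ℂ) 2 i 1

theorem inner_mvec_left (i : MBasis r J L) (u : MSpace r J L) : ⟪mvec i, u⟫_ℂ = u i := by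
  unfold mvec
  convert lp.inner_single_left (G := fun _ => ℂ) i 1 u
  simp

end FockSpace

section Creation

variable {r : ℕ} {L : Type*} {β : ℝ} {p q : Fin r} {l : L}
  {T : MSpace r Set.univ L →L[ℂ] MSpace r Set.univ L}

theorem IsMFCreation.apply_mvec (hT : IsMFCreation β p q l (Set.mem_univ _) T) (i : Index r L) :
    T (mvec i) =
      if h : startIdx i = q then (√β : ℂ) • mvec (inr (push ((p, q), l) i h)) else 0 := by
  rcases i with t | w
  · by_cases h : t = q
    · subst h
      exact (dif_pos rfl).symm ▸ hT.1
    · rw [dif_neg (show ¬startIdx (inl t) = q from h)]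
      exact hT.2.1 t h
  · by_cases h : w.head.1.1 = q
    · rw [dif_pos (show startIdx (inr w) = q from h)]
      exact hT.2.2.1 w h
    · rw [dif_neg (show ¬startIdx (inr w) = q from h)]
      exact hT.2.2.2 w h

theorem IsMFCreation.inner_apply_mvec_left (hT : IsMFCreation β p q l (Set.mem_univ _) T)
    (i : Index r L) (u : MSpace r Set.univ L) :
    ⟪T (mvec i), u⟫_ℂ =
      if h : startIdx i = q then (√β : ℂ) * u (inr (push ((p, q), l) i h)) else 0 := by
  rw [IsMFCreation.apply_mvec hT]
  split_ifs
  · rw [inner_smul_left, Complex.conj_ofReal, inner_mvec_left]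
  · exact inner_zero_left _

theorem IsMFCreation.adjoint_apply_mvec_inl (hT : IsMFCreation β p q l (Set.mem_univ _) T)
    (t : Fin r) : ContinuousLinearMap.adjoint T (mvec (inl t)) = 0 := by
  refine lp.ext (funext fun j => ?_)
  rw [← inner_mvec_left, ContinuousLinearMap.adjoint_inner_right,
    IsMFCreation.inner_apply_mvec_left hT]
  split_ifs <;> simp [coe_mvec]

theorem IsMFCreation.adjoint_apply_mvec_inr (hT : IsMFCreation β p q l (Set.mem_univ _) T)
    (y : Word r L) : ContinuousLinearMap.adjoint T (mvec (inr y)) =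
      if y.head = ((p, q), l) then (√β : ℂ) • mvec (pop y) else 0 := by
  refine lp.ext (funext fun j => ?_)
  rw [← inner_mvec_left, ContinuousLinearMap.adjoint_inner_right,
    IsMFCreation.inner_apply_mvec_left hT]
  by_cases hyj : y.head = ((p, q), l) ∧ pop y = j
  · obtain ⟨hy, rfl⟩ := hyj
    have hstart : startIdx (pop y) = q := (startIdx_pop y).trans (by rw [hy])
    rw [dif_pos hstart, if_pos hy]
    simp only [coe_mvec, lp.coeFn_smul, Pi.smul_apply, push_eq_iff.mpr ⟨hy, rfl⟩,
      Pi.single_eq_same, smul_eq_mul]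
  · have hne : ∀ h, push ((p, q), l) j h ≠ y := fun h he => hyj (push_eq_iff.mp he)
    simp only [coe_mvec, ne_eq, inr.injEq, hne, not_false_eq_true, Pi.single_eq_of_ne, mul_zero,
      dite_eq_ite, ite_self]
    split_ifs with hy
    · have hj : j ≠ pop y := fun h => hyj ⟨hy, h.symm⟩
      simp only [lp.coeFn_smul, Pi.smul_apply, coe_mvec, Pi.single_eq_of_ne hj, smul_zero]
    · rfl

theorem IsMFCreation.inner_adjoint_apply_mvec_inr_left
    (hT : IsMFCreation β p q l (Set.mem_univ _) T) (y : Word r L) (u : MSpace r Set.univ L) :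
    ⟪ContinuousLinearMap.adjoint T (mvec (inr y)), u⟫_ℂ =
      if y.head = ((p, q), l) then (√β : ℂ) * u (pop y) else 0 := by
  rw [IsMFCreation.adjoint_apply_mvec_inr hT]
  split_ifs
  · rw [inner_smul_left, Complex.conj_ofReal, inner_mvec_left]
  · exact inner_zero_left _

end Creation

section Zeta

theorem adjoint_sOp {H : Type*} [NormedAddCommGroup H] [InnerProductSpace ℂ H] [CompleteSpace H]
    (ε : Bool) (x : H →L[ℂ] H) : ContinuousLinearMap.adjoint (sOp ε x) = sOp (!ε) x := by
  cases ε <;> simp [sOp]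

variable {r : ℕ} {b : Fin r → Fin r → ℝ}
  {C : (p q : Fin r) → Label → (MSpace r Set.univ Label →L[ℂ] MSpace r Set.univ Label)}

theorem sOp_zetaSum (ε : Bool) : sOp ε (zetaSum C) = ∑ pq : Fin r × Fin r,
    (C pq.1 pq.2 (creLabel ε) + ContinuousLinearMap.adjoint (C pq.2 pq.1 (creLabel !ε))) := by
  cases ε
  · simp only [sOp, zetaSum, Bool.false_eq_true, if_false, ← ContinuousLinearMap.star_eq_adjoint,
      star_sum, star_add, star_star]
    exact Fintype.sum_equiv (Equiv.prodComm _ _) _ _ fun pq => add_comm _ _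
  · rfl

variable (hC : ∀ p q l, IsMFCreation (b p q) p q l (Set.mem_univ _) (C p q l))
include hC

theorem coe_sOp_zetaSum_apply (ε : Bool) (u : MSpace r Set.univ Label) :
    ⇑(sOp ε (zetaSum C) u) = zetaCoeff b ε ⇑u := by
  funext i
  rw [← inner_mvec_left, ← ContinuousLinearMap.adjoint_inner_left, adjoint_sOp, sOp_zetaSum]
  simp only [sum_apply, add_apply, sum_inner, inner_add_left, Finset.sum_add_distrib,
    IsMFCreation.inner_apply_mvec_left (hC _ _ _), Bool.not_not, Fintype.sum_prod_type,
    Finset.sum_dite_eq, Finset.mem_univ, if_true]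
  rcases i with t | y
  · simp only [IsMFCreation.adjoint_apply_mvec_inl (hC _ _ _), inner_zero_left,
      Finset.sum_const_zero, add_zero, zetaCoeff_inl]
    rfl
  · simp only [IsMFCreation.inner_adjoint_apply_mvec_inr_left (hC _ _ _), Prod.ext_iff,
      zetaCoeff_inr, sqrtCov, ite_and, Finset.sum_ite_eq, Finset.mem_univ, if_true]
    rfl

theorem coe_prod_sOp_zetaSum_apply (εs : List Bool) (u : MSpace r Set.univ Label) :
    ⇑((εs.map fun ε => sOp ε (zetaSum C)).prod u) = zetaWordCoeff b εs ⇑u := by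
  induction εs with
  | nil => rfl
  | cons ε εs ih =>
    rw [List.map_cons, List.prod_cons, mul_apply_eq_comp, coe_sOp_zetaSum_apply hC, ih]
    rfl

theorem PsiM_ofFn_eq_moment (q : Fin r) {k : ℕ} (ε : Fin k → Bool) :
    PsiM q (List.ofFn fun j => sOp (ε j) (zetaSum C)).prod = moment b q (List.ofFn ε) := by
  have hmap : (List.ofFn fun j => sOp (ε j) (zetaSum C)) =
      (List.ofFn ε).map (sOp · (zetaSum C)) := by
    rw [List.map_ofFn]
    rfl
  rw [PsiM, hmap, vac, inner_mvec_left, coe_prod_sOp_zetaSum_apply hC, coe_mvec]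
  rfl

theorem momentMat_eq_diagonal {k : ℕ} (ε : Fin k → Bool) :
    momentMat C k ε = Matrix.diagonal fun q => moment b q (List.ofFn ε) :=
  congrArg Matrix.diagonal (funext fun q => PsiM_ofFn_eq_moment hC q ε)

end Zeta

theorem Dmap_diagonal_mul_mul_diagonal {r : ℕ} (x y : Fin r → ℂ) (A : Matrix (Fin r) (Fin r) ℂ) :
    Dmap (Matrix.diagonal x * A * Matrix.diagonal y) =
      Matrix.diagonal fun q => ∑ p, x p * A p q * y q := by
  simp [Dmap, Matrix.mul_diagonal, Matrix.diagonal_mul]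

end MatricialCircular

/-- (i) all odd *-moments of `ζ = Σ_{p,q} ζ_{p,q}` vanish; (ii) the diagonal
matrices of moments `C_m(ε)` satisfy the Catalan-type recurrence
`C_m(ε) = Σ_{j=0}^{m−1} [ε₁ ≠ ε_{2j+2}]·𝒟(C_j(ε₂,…,ε_{2j+1})·B·C_{m−1−j}(ε_{2j+3},…,ε_{2m}))`. -/
theorem momentMatrix_recurrence
    (r : ℕ)
    (b : Fin r → Fin r → ℝ) (hb : ∀ p q, 0 ≤ b p q)
    (C : (p q : Fin r) → (Unit ⊕ Unit) →
      (MSpace r Set.univ (Unit ⊕ Unit) →L[ℂ] MSpace r Set.univ (Unit ⊕ Unit)))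
    (hC : ∀ p q l, IsMFCreation (b p q) p q l (Set.mem_univ _) (C p q l)) :
    (∀ (k : ℕ), Odd k → ∀ (q : Fin r) (ε : Fin k → Bool),
      PsiM q (List.ofFn (fun j => sOp (ε j) (zetaSum C))).prod = 0) ∧
    (∀ (m : ℕ), 1 ≤ m → ∀ (ε : Fin (2 * m) → Bool),
      momentMat C (2 * m) ε
        = ∑ j ∈ (Finset.range m).attach,
            (have hj : (j : ℕ) < m := Finset.mem_range.mp j.2
             if ε ⟨0, by omega⟩ ≠ ε ⟨2 * (j : ℕ) + 1, by omega⟩ then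
               Dmap ((momentMat C (2 * (j : ℕ))
                   (fun i => ε ⟨(i : ℕ) + 1, by have := i.isLt; omega⟩))
                 * (Matrix.of fun p q => (b p q : ℂ))
                 * (momentMat C (2 * (m - 1 - (j : ℕ)))
                   (fun i => ε ⟨(i : ℕ) + 2 * (j : ℕ) + 2, by have := i.isLt; omega⟩)))
             else 0)) := by
  refine ⟨fun k hk q ε => ?_, fun m hm ε => ?_⟩
  · rw [MatricialCircular.PsiM_ofFn_eq_moment hC]
    exact MatricialCircular.moment_eq_zero_of_odd b q (by rwa [List.length_ofFn])
  · simp only [MatricialCircular.momentMat_eq_diagonal hC,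
      MatricialCircular.Dmap_diagonal_mul_mul_diagonal, Matrix.of_apply, Matrix.sum_ite_diagonal,
      MatricialCircular.moment_ofFn_two_mul hb _ hm]
end
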